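/- (Independent block comparison.) Let T = 2τm for positive integers τ, m, and define the 'odd' index blocks H_j = {2(j−1)m + 1, ..., (2j−1)m} for j = 1,...,τ. Let ν be the joint law, under the stationary chain of length T, of the τ blocks ((z_t)_{t∈H_1}, ..., (z_t)_{t∈H_τ}) as a probability measure on (S^m)^τ, and let ν̃ be the τ-fold product measure whose factors each equal the law of (z_1,...,z_m) under the stationary chain (which, by stationarity, is the common marginal law of every block (z_t)_{t∈H_j}). Then for every subset A ⊆ (S^m)^τ, |ν(A) − ν̃(A)| ≤ τ·β(m). -/

import Mathlib

/-!
The odd blocks of the stationary chain form themselves a stationary Markov chain on `S^m`: it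
starts from the law `p` of a stationary path of length `m`, and a block `b` is followed by `b'`
across a gap of `m` states, with kernel `K(b, b') = Q^(m+1)(b_last, b'_0) · w(b')`, where `w` is
the path weight. Replacing the transitions of a chain by fresh draws from its stationary law one
at a time costs `∑_b p(b) ‖K(b, ·) - p‖₁ = ∑_x π(x) ‖Q^(m+1)(x, ·) - π‖₁ ≤ 2 β(m)` per step.
Both laws have total mass one, so an event sees at most half of their `ℓ¹` distance.
-/

open Finset Matrix

variable {Ω : Type*}

def pathWeight (P : Matrix Ω Ω ℝ) {n : ℕ} (a : Fin (n + 1) → Ω) : ℝ :=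
  ∏ i : Fin n, P (a i.castSucc) (a i.succ)

def markovLaw (p : Ω → ℝ) (P : Matrix Ω Ω ℝ) {n : ℕ} (a : Fin (n + 1) → Ω) : ℝ :=
  p (a 0) * pathWeight P a

def meanRowDist [Fintype Ω] (q : Ω → ℝ) (M : Matrix Ω Ω ℝ) : ℝ :=
  ∑ x, q x * ∑ y, |M x y - q y|

section MarkovChain

variable (P : Matrix Ω Ω ℝ) {n : ℕ}

lemma pathWeight_cons (x : Ω) (a : Fin (n + 1) → Ω) :
    pathWeight P (Fin.cons x a : Fin (n + 2) → Ω) = P x (a 0) * pathWeight P a := by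
  simp [pathWeight, Fin.prod_univ_succ]

lemma pathWeight_snoc (a : Fin (n + 1) → Ω) (y : Ω) :
    pathWeight P (Fin.snoc a y : Fin (n + 2) → Ω) = pathWeight P a * P (a (Fin.last n)) y := by
  simp [pathWeight, Fin.prod_univ_castSucc, -Fin.castSucc_succ, Fin.succ_castSucc]

lemma pathWeight_nonneg (hP : ∀ x y, 0 ≤ P x y) (a : Fin (n + 1) → Ω) : 0 ≤ pathWeight P a :=
  prod_nonneg fun _ _ => hP _ _

lemma markovLaw_cons (p : Ω → ℝ) (x : Ω) (a : Fin (n + 1) → Ω) :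
    markovLaw p P (Fin.cons x a : Fin (n + 2) → Ω) = p x * markovLaw (P x) P a := by
  rw [markovLaw, pathWeight_cons, markovLaw, Fin.cons_zero]

lemma markovLaw_snoc (p : Ω → ℝ) (a : Fin (n + 1) → Ω) (y : Ω) :
    markovLaw p P (Fin.snoc a y : Fin (n + 2) → Ω) = markovLaw p P a * P (a (Fin.last n)) y := by
  simp [markovLaw, pathWeight_snoc, mul_assoc]

lemma markovLaw_fin_one (p : Ω → ℝ) (a : Fin 1 → Ω) : markovLaw p P a = p (a 0) := by
  simp [markovLaw, pathWeight]

lemma markovLaw_sub (p q : Ω → ℝ) (a : Fin (n + 1) → Ω) :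
    markovLaw p P a - markovLaw q P a = markovLaw (p - q) P a := by
  simp only [markovLaw, Pi.sub_apply, sub_mul]

variable [Fintype Ω]

lemma sum_tuple_cons {M : Type*} [AddCommMonoid M] (f : (Fin (n + 1) → Ω) → M) :
    ∑ a, f a = ∑ x, ∑ a : Fin n → Ω, f (Fin.cons x a) := by
  rw [← (Fin.consEquiv fun _ => Ω).sum_comp, Fintype.sum_prod_type]
  rfl

lemma sum_tuple_snoc {M : Type*} [AddCommMonoid M] (f : (Fin (n + 1) → Ω) → M) :
    ∑ a, f a = ∑ y, ∑ a : Fin n → Ω, f (Fin.snoc a y) := by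
  rw [← (Fin.snocEquiv fun _ => Ω).sum_comp, Fintype.sum_prod_type]
  rfl

lemma sum_tuple_fin_one {M : Type*} [AddCommMonoid M] (f : (Fin 1 → Ω) → M) :
    ∑ a, f a = ∑ x, f fun _ => x :=
  ((Equiv.funUnique (Fin 1) Ω).symm.sum_comp f).symm

variable [DecidableEq Ω]

lemma sum_markovLaw_mul_last (p h : Ω → ℝ) :
    ∑ a : Fin (n + 1) → Ω, markovLaw p P a * h (a (Fin.last n)) = ∑ z, (p ᵥ* P ^ n) z * h z := by
  induction n generalizing h with
  | zero => simp [sum_tuple_fin_one, markovLaw_fin_one]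
  | succ n ih =>
    calc ∑ a : Fin (n + 2) → Ω, markovLaw p P a * h (a (Fin.last (n + 1)))
        = ∑ a : Fin (n + 1) → Ω, markovLaw p P a * ∑ y, P (a (Fin.last n)) y * h y := by
          rw [sum_tuple_snoc, sum_comm]
          simp only [markovLaw_snoc, Fin.snoc_last, mul_sum, mul_assoc]
      _ = ∑ z, (p ᵥ* P ^ (n + 1)) z * h z := by
          rw [ih fun z => ∑ y, P z y * h y, pow_succ, ← vecMul_vecMul]
          simp only [vecMul, dotProduct, mul_sum, sum_mul, mul_assoc]
          exact sum_comm

lemma sum_markovLaw (hP : P ∈ rowStochastic ℝ Ω) (p : Ω → ℝ) :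
    ∑ a : Fin (n + 1) → Ω, markovLaw p P a = ∑ x, p x := by
  have h := sum_markovLaw_mul_last P (n := n) p 1
  simp only [Pi.one_apply, mul_one] at h
  rw [h, ← dotProduct_one, ← dotProduct_mulVec, (pow_mem hP n).2, dotProduct_one]

lemma markovLaw_nonneg {p : Ω → ℝ} (hp : ∀ x, 0 ≤ p x) (hP : P ∈ rowStochastic ℝ Ω)
    (a : Fin (n + 1) → Ω) : 0 ≤ markovLaw p P a :=
  mul_nonneg (hp _) (pathWeight_nonneg P hP.1 a)

lemma sum_abs_markovLaw_sub (hP : P ∈ rowStochastic ℝ Ω) (p q : Ω → ℝ) :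
    ∑ a : Fin (n + 1) → Ω, |markovLaw p P a - markovLaw q P a| = ∑ x, |p x - q x| := by
  have habs (a : Fin (n + 1) → Ω) :
      |markovLaw p P a - markovLaw q P a| = markovLaw (fun x => |p x - q x|) P a := by
    rw [markovLaw_sub, markovLaw, markovLaw, abs_mul, abs_of_nonneg (pathWeight_nonneg P hP.1 a)]
    rfl
  simp only [habs, sum_markovLaw P hP]

lemma sum_abs_markovLaw_sub_prod (hP : P ∈ rowStochastic ℝ Ω) {q : Ω → ℝ}
    (hq0 : ∀ x, 0 ≤ q x) (hq1 : ∑ x, q x = 1) (p : Ω → ℝ) :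
    ∑ a : Fin (n + 1) → Ω, |markovLaw p P a - ∏ i, q (a i)|
      ≤ ∑ x, |p x - q x| + n * meanRowDist q P := by
  induction n generalizing p with
  | zero => simp [sum_tuple_fin_one, markovLaw_fin_one]
  | succ n ih =>
    have hstep (x : Ω) : ∑ a : Fin (n + 1) → Ω,
        |markovLaw p P (Fin.cons x a) - ∏ i, q ((Fin.cons x a : Fin (n + 2) → Ω) i)|
          ≤ |p x - q x| + q x * (∑ y, |P x y - q y| + n * meanRowDist q P) := by
      calc _ ≤ ∑ a : Fin (n + 1) → Ω, (|p x - q x| * markovLaw (P x) P a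
              + q x * |markovLaw (P x) P a - ∏ i, q (a i)|) := by
            refine sum_le_sum fun a _ => ?_
            rw [markovLaw_cons, Fin.prod_univ_succ]
            simp only [Fin.cons_zero, Fin.cons_succ]
            calc _ = |(p x - q x) * markovLaw (P x) P a
                    + q x * (markovLaw (P x) P a - ∏ i, q (a i))| := by ring_nf
              _ ≤ _ := by
                refine (abs_add_le _ _).trans_eq ?_
                rw [abs_mul, abs_mul, abs_of_nonneg (markovLaw_nonneg P (hP.1 x) hP a),
                  abs_of_nonneg (hq0 x)]
        _ ≤ _ := by
            rw [sum_add_distrib, ← mul_sum, ← mul_sum, sum_markovLaw P hP,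
              sum_row_of_mem_rowStochastic hP, mul_one]
            gcongr
            · exact hq0 x
            · exact ih (P x)
    rw [sum_tuple_cons]
    refine (sum_le_sum fun x _ => hstep x).trans_eq ?_
    simp only [sum_add_distrib, mul_add, ← sum_mul, hq1, meanRowDist]
    push_cast
    ring

end MarkovChain

section Stationary

variable [Fintype Ω] (P : Matrix Ω Ω ℝ) {π : Ω → ℝ}

lemma meanRowDist_nonneg (M : Matrix Ω Ω ℝ) (hπ0 : ∀ x, 0 ≤ π x) : 0 ≤ meanRowDist π M :=
  sum_nonneg fun x _ => mul_nonneg (hπ0 x) (sum_nonneg fun _ _ => abs_nonneg _)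

variable [DecidableEq Ω]

lemma vecMul_pow_of_vecMul_eq (hπ : π ᵥ* P = π) (k : ℕ) : π ᵥ* P ^ k = π := by
  induction k with
  | zero => simp
  | succ k ih => rw [pow_succ, ← vecMul_vecMul, ih, hπ]

/-- The rows of `P * M` are `P`-averages of rows of `M`, and `π` is stationary for `P`. -/
lemma meanRowDist_mul_le (hP : P ∈ rowStochastic ℝ Ω) (hπ0 : ∀ x, 0 ≤ π x) (hπ : π ᵥ* P = π)
    (M : Matrix Ω Ω ℝ) : meanRowDist π (P * M) ≤ meanRowDist π M := by
  have hrow (x y : Ω) : (P * M) x y - π y = ∑ z, P x z * (M z y - π y) := by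
    simp only [mul_sub, sum_sub_distrib, ← sum_mul, sum_row_of_mem_rowStochastic hP, one_mul,
      mul_apply]
  calc meanRowDist π (P * M)
      ≤ ∑ x, π x * ∑ z, P x z * ∑ y, |M z y - π y| := by
        refine sum_le_sum fun x _ => mul_le_mul_of_nonneg_left ?_ (hπ0 x)
        simp only [hrow, mul_sum]
        rw [sum_comm]
        refine sum_le_sum fun y _ => (abs_sum_le_sum_abs _ _).trans_eq ?_
        simp only [abs_mul, abs_of_nonneg (hP.1 _ _)]
    _ = meanRowDist π M := by
        simp only [mul_sum, meanRowDist]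
        rw [sum_comm]
        refine sum_congr rfl fun z _ => ?_
        rw [← congrFun hπ z]
        simp only [vecMul, dotProduct, sum_mul, mul_assoc]
        rw [sum_comm]

end Stationary

lemma abs_sum_indicator_sub_le_half {ι : Type*} [Fintype ι] (A : Set ι) {μ ν : ι → ℝ}
    (hμν : ∑ i, μ i = ∑ i, ν i) :
    |∑ i, A.indicator μ i - ∑ i, A.indicator ν i| ≤ (∑ i, |μ i - ν i|) / 2 := by
  set d := μ - ν
  have habs (B : Set ι) : |∑ i, B.indicator d i| ≤ ∑ i, B.indicator (fun i => |d i|) i :=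
    (abs_sum_le_sum_abs _ _).trans (sum_le_sum fun i _ => by by_cases hi : i ∈ B <;> simp [hi])
  have hcompl : ∑ i, Aᶜ.indicator d i = -∑ i, A.indicator d i := by
    rw [eq_neg_iff_add_eq_zero, ← sum_add_distrib]
    simpa only [add_comm (Aᶜ.indicator d _), Set.indicator_self_add_compl_apply, d,
      Pi.sub_apply, sum_sub_distrib, sub_eq_zero] using hμν
  have hsplit : ∑ i, |d i|
      = ∑ i, A.indicator (fun i => |d i|) i + ∑ i, Aᶜ.indicator (fun i => |d i|) i := by
    rw [← sum_add_distrib]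
    simp only [Set.indicator_self_add_compl_apply]
  calc |∑ i, A.indicator μ i - ∑ i, A.indicator ν i| = |∑ i, A.indicator d i| := by
        simp [d, Set.indicator_sub']
    _ ≤ (∑ i, |d i|) / 2 := by
        have hAc := habs Aᶜ
        rw [hcompl, abs_neg] at hAc
        linarith [habs A]

section StepWeight

variable (P : Matrix Ω Ω ℝ) {N : ℕ} (X : Fin (N + 1) → Ω)

def stepWeight (s : Fin (N + 1)) : ℝ :=
  if h : (s : ℕ) + 1 < N + 1 then P (X s) (X ⟨s + 1, h⟩) else 1

lemma stepWeight_of_val_eq {s s' : Fin (N + 1)} (h : (s' : ℕ) = s + 1) :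
    stepWeight P X s = P (X s) (X s') := by
  rw [stepWeight, dif_pos (h ▸ s'.isLt)]
  exact congrArg (P (X s)) (congrArg X (Fin.ext h.symm))

lemma stepWeight_of_val_eq_last {s : Fin (N + 1)} (h : (s : ℕ) = N) : stepWeight P X s = 1 :=
  dif_neg (by omega)

lemma pathWeight_eq_prod_stepWeight : pathWeight P X = ∏ s, stepWeight P X s := by
  rw [Fin.prod_univ_castSucc, stepWeight_of_val_eq_last P X (Fin.val_last N), mul_one]
  exact prod_congr rfl fun i _ => (stepWeight_of_val_eq P X rfl).symm

end StepWeight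

section Blocks

def blockIndex {τ m T : ℕ} (h : τ * (m + m) = T) : Fin τ × (Fin m ⊕ Fin m) ≃ Fin T :=
  (Equiv.prodCongr (Equiv.refl _) finSumFinEquiv).trans (finProdFinEquiv.trans (finCongr h))

variable {τ m T : ℕ} (h : τ * (m + m) = T)

lemma blockIndex_inl_val (j : Fin τ) (t : Fin m) :
    (blockIndex h (j, .inl t) : ℕ) = (m + m) * j + t := by
  simp [blockIndex, add_comm]

lemma blockIndex_inr_val (j : Fin τ) (t : Fin m) :
    (blockIndex h (j, .inr t) : ℕ) = (m + m) * j + m + t := by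
  simp [blockIndex]
  ring

def splitBlocks : (Fin T → Ω) ≃ (Fin τ → Fin m → Ω) × (Fin τ → Fin m → Ω) :=
  ((blockIndex h).arrowCongr (Equiv.refl Ω)).symm.trans <|
    (Equiv.curry _ _ _).trans <|
      (Equiv.piCongrRight fun _ => Equiv.sumArrowEquivProdArrow _ _ _).trans
        (Equiv.arrowProdEquivProdArrow _ _ _)

lemma splitBlocks_apply (X : Fin T → Ω) :
    splitBlocks h X = (fun j t => X (blockIndex h (j, .inl t)),
      fun j t => X (blockIndex h (j, .inr t))) :=
  rfl

end Blocks

section BlockChain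

variable (P : Matrix Ω Ω ℝ) {n k N : ℕ}

def gapExit (B : Fin (n + 1) → Fin (k + 1) → Ω) (j : Fin (n + 1)) (z : Ω) : ℝ :=
  if h : (j : ℕ) + 1 < n + 1 then P z (B ⟨j + 1, h⟩ 0) else 1

lemma pathWeight_eq_prod_blocks (h : (n + 1) * (k + 1 + (k + 1)) = N + 1)
    {X : Fin (N + 1) → Ω} {B G : Fin (n + 1) → Fin (k + 1) → Ω}
    (hX : splitBlocks h X = (B, G)) :
    pathWeight P X = ∏ j, pathWeight P (B j) *
      (P (B j (Fin.last k)) (G j 0) * pathWeight P (G j) * gapExit P B j (G j (Fin.last k))) := by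
  obtain ⟨rfl, rfl⟩ := Prod.ext_iff.mp hX
  rw [pathWeight_eq_prod_stepWeight, ← (blockIndex h).prod_comp, Fintype.prod_prod_type]
  refine prod_congr rfl fun j _ => ?_
  rw [Fintype.prod_sum_type, Fin.prod_univ_castSucc, Fin.prod_univ_castSucc]
  have hblock (t : Fin k) : stepWeight P X (blockIndex h (j, .inl t.castSucc))
      = P (X (blockIndex h (j, .inl t.castSucc))) (X (blockIndex h (j, .inl t.succ))) :=
    stepWeight_of_val_eq P X (by simp [blockIndex_inl_val]; ring)
  have hentry : stepWeight P X (blockIndex h (j, .inl (Fin.last k)))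
      = P (X (blockIndex h (j, .inl (Fin.last k)))) (X (blockIndex h (j, .inr 0))) :=
    stepWeight_of_val_eq P X (by simp [blockIndex_inl_val, blockIndex_inr_val]; ring)
  have hgap (t : Fin k) : stepWeight P X (blockIndex h (j, .inr t.castSucc))
      = P (X (blockIndex h (j, .inr t.castSucc))) (X (blockIndex h (j, .inr t.succ))) :=
    stepWeight_of_val_eq P X (by simp [blockIndex_inr_val]; ring)
  have hexit : stepWeight P X (blockIndex h (j, .inr (Fin.last k)))
      = gapExit P (splitBlocks h X).1 j (X (blockIndex h (j, .inr (Fin.last k)))) := by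
    rw [gapExit]
    split_ifs with hj
    · refine stepWeight_of_val_eq P X ?_
      simp [blockIndex_inl_val, blockIndex_inr_val]
      ring
    · refine stepWeight_of_val_eq_last P X ?_
      rw [blockIndex_inr_val, show (j : ℕ) = n by omega, Fin.val_last]
      linarith
  simp only [hblock, hentry, hgap, hexit, splitBlocks_apply, pathWeight]
  ring

lemma prod_gapExit (M : Matrix Ω Ω ℝ) (B : Fin (n + 1) → Fin (k + 1) → Ω) :
    ∏ j, gapExit M B j (B j (Fin.last k))
      = ∏ i : Fin n, M (B i.castSucc (Fin.last k)) (B i.succ 0) := by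
  rw [Fin.prod_univ_castSucc, gapExit, dif_neg (by simp), mul_one]
  exact prod_congr rfl fun i _ => dif_pos i.succ.isLt

variable [Fintype Ω] [DecidableEq Ω]

lemma sum_mul_pathWeight_mul_last (x : Ω) (φ : Ω → ℝ) :
    ∑ g : Fin (k + 1) → Ω, P x (g 0) * pathWeight P g * φ (g (Fin.last k))
      = ∑ z, (P ^ (k + 1)) x z * φ z := by
  refine (sum_markovLaw_mul_last P (P x) φ).trans (sum_congr rfl fun z _ => ?_)
  rw [pow_succ', mul_apply]
  rfl

lemma sum_mul_pathWeight_mul_gapExit (hP : P ∈ rowStochastic ℝ Ω)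
    (B : Fin (n + 1) → Fin (k + 1) → Ω) (j : Fin (n + 1)) (x : Ω) :
    ∑ g : Fin (k + 1) → Ω, P x (g 0) * pathWeight P g * gapExit P B j (g (Fin.last k))
      = gapExit (P ^ (k + 2)) B j x := by
  rw [sum_mul_pathWeight_mul_last]
  unfold gapExit
  split_ifs
  · rw [pow_succ _ (k + 1), mul_apply]
  · simp [sum_row_of_mem_rowStochastic (pow_mem hP _)]

/-- `k + 2` steps lead from the last state of a block of length `k + 1`, across the gap, to the
first state of the next block. -/
def blockKernel (P : Matrix Ω Ω ℝ) (k : ℕ) : Matrix (Fin (k + 1) → Ω) (Fin (k + 1) → Ω) ℝ :=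
  fun b => markovLaw ((P ^ (k + 2)) (b (Fin.last k))) P

theorem sum_mul_markovLaw_splitBlocks (hP : P ∈ rowStochastic ℝ Ω) (p : Ω → ℝ)
    (h : (n + 1) * (k + 1 + (k + 1)) = N + 1) (F : (Fin (n + 1) → Fin (k + 1) → Ω) → ℝ) :
    ∑ X, F (splitBlocks h X).1 * markovLaw p P X
      = ∑ B, F B * markovLaw (markovLaw p P) (blockKernel P k) B := by
  rw [← (splitBlocks h).symm.sum_comp, Fintype.sum_prod_type]
  refine sum_congr rfl fun B _ => ?_
  simp only [Equiv.apply_symm_apply, ← mul_sum]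
  congr 1
  have hX (G) : splitBlocks h ((splitBlocks h).symm (B, G)) = (B, G) := Equiv.apply_symm_apply _ _
  have hstart (G) : (splitBlocks h).symm (B, G) 0 = B 0 0 :=
    calc (splitBlocks h).symm (B, G) 0 = (splitBlocks h).symm (B, G) (blockIndex h (0, .inl 0)) :=
          congrArg _ (Fin.ext (by simp [blockIndex_inl_val]))
      _ = B 0 0 := congrArg (fun Y => Y.1 0 0) (hX G)
  set c : Fin (n + 1) → (Fin (k + 1) → Ω) → ℝ := fun j g =>
    P (B j (Fin.last k)) (g 0) * pathWeight P g * gapExit P B j (g (Fin.last k)) with hc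
  have hG (G) : markovLaw p P ((splitBlocks h).symm (B, G))
      = (p (B 0 0) * ∏ j, pathWeight P (B j)) * ∏ j, c j (G j) := by
    rw [markovLaw, hstart, pathWeight_eq_prod_blocks P h (hX G), prod_mul_distrib, mul_assoc]
  simp only [hG, ← mul_sum]
  rw [← Fintype.prod_sum]
  simp only [hc, sum_mul_pathWeight_mul_gapExit P hP]
  rw [prod_gapExit, Fin.prod_univ_succ, markovLaw, markovLaw]
  rw [show pathWeight (blockKernel P k) B = ∏ i : Fin n,
      (P ^ (k + 2)) (B i.castSucc (Fin.last k)) (B i.succ 0) * pathWeight P (B i.succ) from rfl,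
    prod_mul_distrib]
  ring

lemma blockKernel_mem_rowStochastic (hP : P ∈ rowStochastic ℝ Ω) :
    blockKernel P k ∈ rowStochastic ℝ (Fin (k + 1) → Ω) :=
  mem_rowStochastic_iff_sum.2
    ⟨fun _ b => markovLaw_nonneg P (fun y => (pow_mem hP _).1 _ y) hP b,
      fun _ => (sum_markovLaw P hP _).trans (sum_row_of_mem_rowStochastic (pow_mem hP _) _)⟩

lemma meanRowDist_blockKernel (hP : P ∈ rowStochastic ℝ Ω) {π : Ω → ℝ} (hπ : π ᵥ* P = π) :
    meanRowDist (markovLaw π P) (blockKernel P k) = meanRowDist π (P ^ (k + 2)) := by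
  unfold meanRowDist
  simp only [blockKernel, sum_abs_markovLaw_sub P hP]
  rw [sum_markovLaw_mul_last P π fun z => ∑ y, |(P ^ (k + 2)) z y - π y|,
    vecMul_pow_of_vecMul_eq P hπ]

theorem sum_abs_markovLaw_blockKernel_sub_prod (hP : P ∈ rowStochastic ℝ Ω) {π : Ω → ℝ}
    (hπ0 : ∀ x, 0 ≤ π x) (hπ1 : ∑ x, π x = 1) (hπ : π ᵥ* P = π) :
    ∑ B : Fin (n + 1) → Fin (k + 1) → Ω,
        |markovLaw (markovLaw π P) (blockKernel P k) B - ∏ j, markovLaw π P (B j)|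
      ≤ n * meanRowDist π (P ^ (k + 1)) := by
  have hlaw1 : ∑ b : Fin (k + 1) → Ω, markovLaw π P b = 1 := (sum_markovLaw P hP π).trans hπ1
  refine (sum_abs_markovLaw_sub_prod _ (blockKernel_mem_rowStochastic P hP)
    (markovLaw_nonneg P hπ0 hP) hlaw1 _).trans ?_
  simp only [sub_self, abs_zero, sum_const_zero, zero_add]
  rw [meanRowDist_blockKernel P hP hπ, pow_succ']
  gcongr
  exact meanRowDist_mul_le P hP hπ0 hπ _

theorem sum_indicator_preimage_splitBlocks (hP : P ∈ rowStochastic ℝ Ω) (p : Ω → ℝ)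
    (h : (n + 1) * (k + 1 + (k + 1)) = N + 1) (A : Set (Fin (n + 1) → Fin (k + 1) → Ω)) :
    ∑ X, ((fun X => (splitBlocks h X).1) ⁻¹' A).indicator (markovLaw p P) X
      = ∑ B, A.indicator (markovLaw (markovLaw p P) (blockKernel P k)) B := by
  classical
  simpa [Set.indicator_apply] using sum_mul_markovLaw_splitBlocks P hP p h (A.indicator 1)

theorem abs_sum_indicator_blockKernel_sub_le (hP : P ∈ rowStochastic ℝ Ω) {π : Ω → ℝ}
    (hπ0 : ∀ x, 0 ≤ π x) (hπ1 : ∑ x, π x = 1) (hπ : π ᵥ* P = π)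
    (A : Set (Fin (n + 1) → Fin (k + 1) → Ω)) :
    |∑ B, A.indicator (markovLaw (markovLaw π P) (blockKernel P k)) B
        - ∑ B, A.indicator (fun B => ∏ j, markovLaw π P (B j)) B|
      ≤ n * meanRowDist π (P ^ (k + 1)) / 2 := by
  have hlaw1 : ∑ b : Fin (k + 1) → Ω, markovLaw π P b = 1 := (sum_markovLaw P hP π).trans hπ1
  refine (abs_sum_indicator_sub_le_half A ?_).trans ?_
  · rw [sum_markovLaw _ (blockKernel_mem_rowStochastic P hP), hlaw1, ← Fintype.prod_sum, hlaw1,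
      prod_const_one]
  · gcongr
    exact sum_abs_markovLaw_blockKernel_sub_prod P hP hπ0 hπ1 hπ

end BlockChain

/-- Independent block comparison. For the stationary chain of length
`T = 2τm`, the joint law `ν` of the τ 'odd' blocks `(z_t)_{t ∈ H_j}`,
`H_j = {2(j−1)m+1, ..., (2j−1)m}`, differs from the product `ν̃` of its (common) block
marginals by at most `τ·β(m)` on every event `A ⊆ (S^m)^τ`. -/
theorem stmt_8
    {S : Type} [Fintype S] [DecidableEq S]
    (Q : Matrix S S ℝ) (hQ0 : ∀ x y, 0 ≤ Q x y) (hQ1 : ∀ x, ∑ y, Q x y = 1)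
    (π : S → ℝ) (hπ0 : ∀ x, 0 ≤ π x) (hπ1 : ∑ x, π x = 1)
    (hπstat : ∀ y, ∑ x, π x * Q x y = π y)
    -- the β-mixing coefficient of the chain
    (β : ℕ → ℝ)
    (hβ : ∀ k : ℕ, β k = ∑ x, π x * ((1 / 2) * ∑ y, |(Q ^ k) x y - π y|))
    (m τ' : ℕ) (hm : 1 ≤ m) (hτ : 1 ≤ τ')
    (T : ℕ) (hT : T = 2 * τ' * m)
    -- idx j t is the (0-indexed) position in {1,...,T} of the t-th element of block H_{j+1}:
    -- H_j = {2(j−1)m+1, ..., (2j−1)m} (1-indexed) corresponds to {2jm, ..., 2jm+m−1} (0-indexed)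
    (idx : Fin τ' → Fin m → Fin T)
    (hidx : ∀ (j : Fin τ') (t : Fin m), (idx j t : ℕ) = 2 * j.1 * m + t.1)
    -- the stationary chain of length T, with states z_1, ..., z_T
    (prob : (Fin T → S) → ℝ)
    (hprob : ∀ X, prob X =
      π (X ⟨0, by rw [hT]; exact Nat.mul_pos (Nat.mul_pos (by norm_num) hτ) hm⟩) *
      ∏ t : Fin (T - 1),
        Q (X (Fin.castLE (Nat.sub_le T 1) t)) (X ⟨t.1 + 1, by have := t.isLt; omega⟩)) :
    -- the stationary chain of length m (the common marginal law of each block)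
    ∀ probm : (Fin m → S) → ℝ,
      (∀ Y, probm Y =
        π (Y ⟨0, hm⟩) *
        ∏ t : Fin (m - 1),
          Q (Y (Fin.castLE (Nat.sub_le m 1) t)) (Y ⟨t.1 + 1, by have := t.isLt; omega⟩)) →
    ∀ A : Set (Fin τ' → Fin m → S),
      |(∑ X, ({X' | (fun j t => X' (idx j t)) ∈ A} : Set (Fin T → S)).indicator prob X)
        - ∑ a, A.indicator (fun a' => ∏ j, probm (a' j)) a| ≤ (τ' : ℝ) * β m := by
  intro probm hprobm A
  obtain ⟨k, rfl⟩ : ∃ k, m = k + 1 := ⟨m - 1, by omega⟩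
  obtain ⟨n, rfl⟩ : ∃ n, τ' = n + 1 := ⟨τ' - 1, by omega⟩
  obtain ⟨N, rfl⟩ : ∃ N, T = N + 1 := ⟨T - 1, (Nat.succ_pred_eq_of_pos (by rw [hT]; positivity)).symm⟩
  have hlen : (n + 1) * (k + 1 + (k + 1)) = N + 1 := by rw [hT]; ring
  have hQ : Q ∈ rowStochastic ℝ S := mem_rowStochastic_iff_sum.2 ⟨hQ0, hQ1⟩
  have hblocks : (fun (X : Fin (N + 1) → S) j t => X (idx j t)) = fun X => (splitBlocks hlen X).1 :=
    funext fun X => funext₂ fun j t =>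
      congrArg X (Fin.ext (by rw [hidx, blockIndex_inl_val]; ring))
  have hevent : {X' | (fun j t => X' (idx j t)) ∈ A} = (fun X => (splitBlocks hlen X).1) ⁻¹' A :=
    congrArg (· ⁻¹' A) hblocks
  rw [hevent, show prob = markovLaw π Q from funext hprob,
    show probm = markovLaw π Q from funext hprobm, sum_indicator_preimage_splitBlocks Q hQ π hlen]
  calc _ ≤ n * meanRowDist π (Q ^ (k + 1)) / 2 :=
        abs_sum_indicator_blockKernel_sub_le Q hQ hπ0 hπ1 (funext hπstat) A
    _ ≤ (n + 1) * meanRowDist π (Q ^ (k + 1)) / 2 := by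
        have := meanRowDist_nonneg (Q ^ (k + 1)) hπ0
        gcongr
        linarith
    _ = ((n + 1 : ℕ) : ℝ) * β (k + 1) := by
        rw [hβ, meanRowDist, Nat.cast_succ, mul_div_assoc, sum_div]
        exact congrArg _ (sum_congr rfl fun x _ => by ring)
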